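/- arXiv:2306.11297 — 2 statements merged into one kernel-verified Lean document; each statement's English description precedes it below -/
import Mathlib

section
/- Let μ > 0, B ≥ 0, γ ≥ 1 be real numbers, and for each integer t ≥ 1 set η_t = 2/(μ(γ + t)). Suppose Δ : ℕ → ℝ is a sequence of nonnegative reals satisfying Δ_{t+1} ≤ (1 − η_t μ) Δ_t + η_t² B for every t ≥ 1. Then for every t ≥ 1, Δ_t ≤ v/(γ + t), where v = max{4B/μ², (γ + 1) Δ_1}. -/
/-! With `s = γ + t`, the recursion reads `Δ_{t+1} ≤ (1 - 2/s) Δ_t + (4B/μ²)/s²`. If `Δ_t ≤ v/s`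
and `4B/μ² ≤ v`, the right-hand side is at most `(s - 1) v / s² ≤ v / (s + 1)`, since
`(s - 1)(s + 1) ≤ s²`; induction on `t` finishes. -/

lemma one_sub_two_div_mul_add_div_sq_le {s x v : ℝ} (hs : 2 ≤ s) (hv : 0 ≤ v) (hx : x ≤ v / s) :
    (1 - 2 / s) * x + v / s ^ 2 ≤ v / (s + 1) := by
  have hs0 : 0 < s := by linarith
  have hcoef : 0 ≤ 1 - 2 / s := by rw [sub_nonneg, div_le_one hs0]; linarith
  calc (1 - 2 / s) * x + v / s ^ 2 ≤ (1 - 2 / s) * (v / s) + v / s ^ 2 := by gcongr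
    _ = (s - 1) * v / s ^ 2 := by field_simp; ring
    _ ≤ v / (s + 1) := by
      rw [div_le_div_iff₀ (by positivity) (by linarith)]
      nlinarith

lemma le_div_add_of_rec_one_sub_two_div {a : ℕ → ℝ} {γ C v : ℝ} (hγ : 1 ≤ γ)
    (hC : C ≤ v) (hv : 0 ≤ v) (h₁ : a 1 ≤ v / (γ + 1))
    (hrec : ∀ t : ℕ, 1 ≤ t → a (t + 1) ≤ (1 - 2 / (γ + t)) * a t + C / (γ + t) ^ 2) :
    ∀ t : ℕ, 1 ≤ t → a t ≤ v / (γ + t) := by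
  intro t ht
  induction t, ht using Nat.le_induction with
  | base => exact_mod_cast h₁
  | succ n hn ih =>
    have hs : 2 ≤ γ + n := by
      have : (1 : ℝ) ≤ n := by exact_mod_cast hn
      linarith
    calc a (n + 1) ≤ (1 - 2 / (γ + n)) * a n + C / (γ + n) ^ 2 := hrec n hn
      _ ≤ (1 - 2 / (γ + n)) * a n + v / (γ + n) ^ 2 := by gcongr
      _ ≤ v / (γ + n + 1) := one_sub_two_div_mul_add_div_sq_le hs hv ih
      _ = v / (γ + ↑(n + 1)) := by push_cast; ring_nf

theorem stmt_0_general (μ B γ : ℝ) (hμ : 0 < μ) (hB : 0 ≤ B) (hγ : 1 ≤ γ)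
    (η : ℕ → ℝ) (hη : ∀ t : ℕ, 1 ≤ t → η t = 2 / (μ * (γ + t)))
    (Δ : ℕ → ℝ)
    (hrec : ∀ t : ℕ, 1 ≤ t → Δ (t + 1) ≤ (1 - η t * μ) * Δ t + (η t) ^ 2 * B) :
    ∀ t : ℕ, 1 ≤ t →
      Δ t ≤ max (4 * B / μ ^ 2) ((γ + 1) * Δ 1) / (γ + t) := by
  have hv : 0 ≤ max (4 * B / μ ^ 2) ((γ + 1) * Δ 1) :=
    le_max_of_le_left (by positivity)
  refine le_div_add_of_rec_one_sub_two_div hγ (le_max_left _ _) hv ?_ fun t ht => ?_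
  · rw [le_div_iff₀ (by linarith), mul_comm]
    exact le_max_right _ _
  · have hs : 0 < γ + t := by
      have : (1 : ℝ) ≤ t := by exact_mod_cast ht
      linarith
    have hημ : η t * μ = 2 / (γ + t) := by rw [hη t ht]; field_simp
    have hηsq : η t ^ 2 * B = 4 * B / μ ^ 2 / (γ + t) ^ 2 := by rw [hη t ht]; field_simp; ring
    simpa only [hημ, hηsq] using hrec t ht

/-- Diminishing-step-size recursion lemma underlying the FedAvg convergence bound. -/
theorem stmt_0 (μ B γ : ℝ) (hμ : 0 < μ) (hB : 0 ≤ B) (hγ : 1 ≤ γ)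
    (η : ℕ → ℝ) (hη : ∀ t : ℕ, 1 ≤ t → η t = 2 / (μ * (γ + t)))
    (Δ : ℕ → ℝ) (hΔnn : ∀ t, 0 ≤ Δ t)
    (hrec : ∀ t : ℕ, 1 ≤ t → Δ (t + 1) ≤ (1 - η t * μ) * Δ t + (η t) ^ 2 * B) :
    ∀ t : ℕ, 1 ≤ t →
      Δ t ≤ max (4 * B / μ ^ 2) ((γ + 1) * Δ 1) / (γ + t) :=
  stmt_0_general μ B γ hμ hB hγ η hη Δ hrec
end

section
/- Let Φ : ℝ^d → ℝ be differentiable with L-Lipschitz gradient (L > 0), let θ* be a global minimizer of Φ, let μ > 0, γ ≥ 1, B ≥ 0, and set η_t = 2/(μ(γ + t)) and κ = L/μ. Let (θ_t)_{t ≥ 1} be a sequence in ℝ^d such that Δ_t := ‖θ_t − θ*‖² satisfies Δ_{t+1} ≤ (1 − η_t μ) Δ_t + η_t² B for all t ≥ 1. Then for every T ≥ 1, Φ(θ_T) − Φ(θ*) ≤ (κ/(γ + T)) · (2B/μ + (μ(γ + 1)/2) ‖θ_1 − θ*‖²). -/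
/-!
Writing `a = γ + t`, the step size satisfies `η_t μ = 2 / a`, and the recursion preserves the
ansatz `Δ_t ≤ v / a` with `v = 4B/μ² + (γ + 1) Δ₁`, because `(a - 2)/a² + 1/a² ≤ 1/(a + 1)`.
The excess risk is then controlled by the descent lemma at the minimizer, where the gradient
vanishes: `Φ θ - Φ θ* ≤ L/2 ‖θ - θ*‖²`.
-/

open scoped NNReal RealInnerProductSpace

section Descent

variable {E : Type*} [NormedAddCommGroup E] [InnerProductSpace ℝ E] [CompleteSpace E]

theorem le_add_inner_gradient_add_of_lipschitzWith_gradient {f : E → ℝ} {K : ℝ≥0}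
    (hf : Differentiable ℝ f) (hK : LipschitzWith K (gradient f)) (x y : E) :
    f y ≤ f x + ⟪gradient f x, y - x⟫ + K / 2 * ‖y - x‖ ^ 2 := by
  set v := y - x
  let c : ℝ → E := fun t => x + t • v
  let g : ℝ → ℝ := fun t => f (c t) - t * ⟪gradient f x, v⟫
  have hg : ∀ t, HasDerivAt g ⟪gradient f (c t) - gradient f x, v⟫ t := by
    intro t
    have hc : HasDerivAt c v t := by
      have h := ((hasDerivAt_id t).smul_const v).const_add x
      rwa [one_smul] at h
    refine (((hf (c t)).hasFDerivAt.comp_hasDerivAt t hc).sub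
      ((hasDerivAt_id t).mul_const ⟪gradient f x, v⟫)).congr_deriv ?_
    simp only [inner_sub_left, inner_gradient_left, one_mul]
  have hg_le : ∀ t, 0 ≤ t → ⟪gradient f (c t) - gradient f x, v⟫ ≤ K * ‖v‖ ^ 2 * t := by
    intro t ht
    calc _ ≤ ‖gradient f (c t) - gradient f x‖ * ‖v‖ := real_inner_le_norm _ _
      _ ≤ K * ‖c t - x‖ * ‖v‖ := by gcongr; exact hK.norm_sub_le _ _
      _ = K * ‖v‖ ^ 2 * t := by
        rw [add_sub_cancel_left, norm_smul, Real.norm_of_nonneg ht]; ring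
  have hB : ∀ t, HasDerivAt (fun t => g 0 + K * ‖v‖ ^ 2 / 2 * t ^ 2) (K * ‖v‖ ^ 2 * t) t := by
    intro t
    refine (((hasDerivAt_pow 2 t).const_mul (K * ‖v‖ ^ 2 / 2)).const_add (g 0)).congr_deriv ?_
    norm_num
    ring
  have h1 := image_le_of_deriv_right_le_deriv_boundary
    (fun t _ => (hg t).continuousAt.continuousWithinAt) (fun t _ => (hg t).hasDerivWithinAt)
    (by simp) (fun t _ => (hB t).continuousAt.continuousWithinAt)
    (fun t _ => (hB t).hasDerivWithinAt) (fun t ht => hg_le t ht.1)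
    (Set.right_mem_Icc.2 zero_le_one)
  simp only [g, c, zero_smul, add_zero, one_smul, zero_mul, sub_zero, one_mul, one_pow, v,
    add_sub_cancel] at h1
  linarith

theorem IsMinOn.sub_le_of_lipschitzWith_gradient {f : E → ℝ} {K : ℝ≥0} {x : E}
    (hf : Differentiable ℝ f) (hK : LipschitzWith K (gradient f))
    (hx : IsMinOn f Set.univ x) (y : E) :
    f y - f x ≤ K / 2 * ‖y - x‖ ^ 2 := by
  have hgrad : gradient f x = 0 := by
    rw [gradient, (hx.isLocalMin Filter.univ_mem).fderiv_eq_zero, map_zero]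
  have := le_add_inner_gradient_add_of_lipschitzWith_gradient hf hK x y
  rw [hgrad, inner_zero_left, add_zero] at this
  linarith

end Descent

theorem one_sub_two_div_mul_div_add_div_sq_le {a v C : ℝ} (ha : 2 ≤ a) (hv : 0 ≤ v)
    (hCv : C ≤ v) : (1 - 2 / a) * (v / a) + C / a ^ 2 ≤ v / (a + 1) := by
  have ha0 : 0 < a := by linarith
  have h : (1 - 2 / a) * (v / a) + C / a ^ 2 ≤ (a - 1) * v / a ^ 2 := by
    rw [show (a - 1) * v / a ^ 2 = (1 - 2 / a) * (v / a) + v / a ^ 2 by field_simp; ring]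
    gcongr
  calc _ ≤ (a - 1) * v / a ^ 2 := h
    _ ≤ v / (a + 1) := by
      rw [div_le_div_iff₀ (by positivity) (by linarith)]
      nlinarith [mul_nonneg hv (sq_nonneg a)]

theorem le_div_add_of_le_one_sub_two_div_mul_add {u : ℕ → ℝ} {γ C v : ℝ} (hγ : 1 ≤ γ)
    (hv : 0 ≤ v) (hCv : C ≤ v) (h1 : u 1 ≤ v / (γ + 1))
    (hrec : ∀ t : ℕ, 1 ≤ t → u (t + 1) ≤ (1 - 2 / (γ + t)) * u t + C / (γ + t) ^ 2) :
    ∀ T : ℕ, 1 ≤ T → u T ≤ v / (γ + T) := by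
  intro T hT
  induction T, hT using Nat.le_induction with
  | base => simpa using h1
  | succ t ht ih =>
    have ht' : (1 : ℝ) ≤ t := by exact_mod_cast ht
    have hfac : 0 ≤ 1 - 2 / (γ + t) := by
      rw [sub_nonneg, div_le_one (by linarith)]; linarith
    calc u (t + 1) ≤ (1 - 2 / (γ + t)) * u t + C / (γ + t) ^ 2 := hrec t ht
      _ ≤ (1 - 2 / (γ + t)) * (v / (γ + t)) + C / (γ + t) ^ 2 := by gcongr
      _ ≤ v / (γ + t + 1) := one_sub_two_div_mul_div_add_div_sq_le (by linarith) hv hCv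
      _ = v / (γ + ↑(t + 1)) := by push_cast; ring

/-- FedAvg convergence guarantee (Equation (5)): the expected excess risk bound. -/
theorem stmt_1 {d : ℕ} (Φ : EuclideanSpace ℝ (Fin d) → ℝ)
    (hdiff : Differentiable ℝ Φ)
    (L : ℝ) (hL : 0 < L)
    (hlip : LipschitzWith (Real.toNNReal L) (gradient Φ))
    (θstar : EuclideanSpace ℝ (Fin d)) (hmin : ∀ θ, Φ θstar ≤ Φ θ)
    (μ γ B : ℝ) (hμ : 0 < μ) (hγ : 1 ≤ γ) (hB : 0 ≤ B)
    (η : ℕ → ℝ) (hη : ∀ t : ℕ, 1 ≤ t → η t = 2 / (μ * (γ + t)))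
    (κ : ℝ) (hκ : κ = L / μ)
    (θ : ℕ → EuclideanSpace ℝ (Fin d))
    (hrec : ∀ t : ℕ, 1 ≤ t →
      ‖θ (t + 1) - θstar‖ ^ 2 ≤ (1 - η t * μ) * ‖θ t - θstar‖ ^ 2 + (η t) ^ 2 * B) :
    ∀ T : ℕ, 1 ≤ T →
      Φ (θ T) - Φ θstar ≤
        (κ / (γ + T)) * (2 * B / μ + (μ * (γ + 1) / 2) * ‖θ 1 - θstar‖ ^ 2) := by
  intro T hT
  set Δ : ℕ → ℝ := fun t => ‖θ t - θstar‖ ^ 2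
  have hΔ : Δ T ≤ (4 * B / μ ^ 2 + (γ + 1) * Δ 1) / (γ + T) := by
    refine le_div_add_of_le_one_sub_two_div_mul_add hγ (by positivity)
      (le_add_of_nonneg_right (by positivity)) ?_ (fun t ht => ?_) T hT
    · rw [le_div_iff₀ (by linarith)]
      linarith [show 0 ≤ 4 * B / μ ^ 2 by positivity]
    · have hγt : 0 < γ + t := by positivity
      calc Δ (t + 1) ≤ (1 - η t * μ) * Δ t + (η t) ^ 2 * B := hrec t ht
        _ = (1 - 2 / (γ + t)) * Δ t + 4 * B / μ ^ 2 / (γ + t) ^ 2 := by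
          rw [hη t ht]; field_simp; ring
  have hdesc := (isMinOn_univ_iff.2 hmin).sub_le_of_lipschitzWith_gradient hdiff hlip (θ T)
  rw [Real.coe_toNNReal L hL.le] at hdesc
  calc Φ (θ T) - Φ θstar ≤ L / 2 * Δ T := hdesc
    _ ≤ L / 2 * ((4 * B / μ ^ 2 + (γ + 1) * Δ 1) / (γ + T)) := by gcongr
    _ = _ := by rw [hκ]; field_simp; ring
end
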